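/- (i) The clone ⟨BiLat, −, ∂⟩ is the clone of all De Morgan functions; (ii) the clone ⟨BiLat, ∂⟩ is exactly the set of all positive De Morgan functions; (iii) the clone ⟨BiLat, −⟩ is exactly the set of all persistent De Morgan functions. -/
import Mathlib


set_option autoImplicit false

/-- The four truth values of the Belnap–Dunn logic. -/
inductive DM4 : Type
  | t
  | f
  | n
  | b
deriving DecidableEq

namespace DM4

/-- De Morgan negation. -/
def neg : DM4 → DM4
  | t => f
  | f => t
  | n => n
  | b => b

/-- Conflation. -/
def conf : DM4 → DM4
  | t => t
  | f => f
  | n => b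
  | b => n

/-- Meet in the truth order. -/
def meet : DM4 → DM4 → DM4
  | f, _ => f
  | _, f => f
  | t, y => y
  | x, t => x
  | n, n => n
  | b, b => b
  | n, b => f
  | b, n => f

/-- Join in the truth order. -/
def join : DM4 → DM4 → DM4
  | t, _ => t
  | _, t => t
  | f, y => y
  | x, f => x
  | n, n => n
  | b, b => b
  | n, b => t
  | b, n => t

/-- Meet in the information order (⊗). -/
def imeet : DM4 → DM4 → DM4
  | n, _ => n
  | _, n => n
  | b, y => y
  | x, b => x
  | t, t => t
  | f, f => f
  | t, f => n
  | f, t => n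

/-- Join in the information order (⊕). -/
def ijoin : DM4 → DM4 → DM4
  | b, _ => b
  | _, b => b
  | n, y => y
  | x, n => x
  | t, t => t
  | f, f => f
  | t, f => b
  | f, t => b

/-- The truth order: least element `f`, greatest element `t`, with `n`, `b` incomparable. -/
def tle (x y : DM4) : Prop := x = y ∨ x = f ∨ y = t

/-- The information order: least element `n`, greatest element `b`, with `t`, `f` incomparable. -/
def ile (x y : DM4) : Prop := x = y ∨ x = n ∨ y = b

/-- □: maps t to t and everything else to f. -/
def box : DM4 → DM4
  | t => t
  | _ => f

/-- ◇: maps f to f and everything else to t. -/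
def diamond : DM4 → DM4
  | f => f
  | _ => t

/-- Δ: maps t, b to t and n, f to f. -/
def delta : DM4 → DM4
  | t => t
  | b => t
  | _ => f

/-- ∇: maps t, n to t and b, f to f. -/
def nabla : DM4 → DM4
  | t => t
  | n => t
  | _ => f

/-- id_{b↦n}: maps b to n and fixes t, f, n. -/
def idbn : DM4 → DM4
  | b => n
  | x => x

/-- id_{n↦b}: maps n to b and fixes t, f, b. -/
def idnb : DM4 → DM4
  | n => b
  | x => x

/-- id_{n↦t}: maps n to t and fixes t, f, b. -/
def idnt : DM4 → DM4
  | n => t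
  | x => x

/-- id_{b↦t}: maps b to t and fixes t, f, n. -/
def idbt : DM4 → DM4
  | b => t
  | x => x

/-- t_{n↦n}: maps n to n and everything else to t. -/
def tnn : DM4 → DM4
  | n => n
  | _ => t

/-- t_{b↦b}: maps b to b and everything else to t. -/
def tbb : DM4 → DM4
  | b => b
  | _ => t

/-- The binary function pbp²₁. -/
def pbp1 : DM4 → DM4 → DM4
  | t, t => t | t, f => f | t, n => f | t, b => b
  | f, t => t | f, f => f | f, n => f | f, b => b
  | n, t => t | n, f => f | n, n => n | n, b => b
  | b, t => b | b, f => f | b, n => f | b, b => b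

/-- The binary function pbp²₂. -/
def pbp2 : DM4 → DM4 → DM4
  | t, t => t | t, f => f | t, n => n | t, b => f
  | f, t => t | f, f => f | f, n => n | f, b => f
  | n, t => n | n, f => f | n, n => n | n, b => f
  | b, t => t | b, f => f | b, n => n | b, b => b

/-- The binary function mnh²₁. -/
def mnh1 : DM4 → DM4 → DM4
  | t, t => f | t, f => f | t, n => n | t, b => b
  | f, t => f | f, f => f | f, n => n | f, b => b
  | n, t => f | n, f => f | n, n => n | n, b => f
  | b, t => f | b, f => f | b, n => n | b, b => b

/-- The binary function mnh²₂. -/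
def mnh2 : DM4 → DM4 → DM4
  | t, t => f | t, f => f | t, n => n | t, b => b
  | f, t => f | f, f => f | f, n => n | f, b => b
  | n, t => f | n, f => f | n, n => n | n, b => b
  | b, t => f | b, f => f | b, n => f | b, b => b

/-- The binary function mhnp². -/
def mhnp2 : DM4 → DM4 → DM4
  | t, _ => t
  | f, _ => t
  | n, b => f
  | n, _ => n
  | b, n => f
  | b, _ => b

/-- The binary function mnp²₁. -/
def mnp1 : DM4 → DM4 → DM4
  | t, b => b
  | t, _ => t
  | f, b => b
  | f, _ => t
  | n, b => f
  | n, _ => n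
  | b, n => f
  | b, _ => b

/-- The binary function mnp²₂. -/
def mnp2 : DM4 → DM4 → DM4
  | t, _ => t
  | f, _ => t
  | n, _ => n
  | b, n => f
  | b, _ => b

/-- The binary function mnp²₃. -/
def mnp3 : DM4 → DM4 → DM4
  | t, n => n
  | t, _ => t
  | f, n => n
  | f, _ => t
  | n, b => f
  | n, _ => n
  | b, n => f
  | b, _ => b

/-- The binary function mnp²₄. -/
def mnp4 : DM4 → DM4 → DM4
  | t, _ => t
  | f, _ => t
  | n, b => f
  | n, _ => n
  | b, _ => b

/-- The ternary function mhnp³. -/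
def mhnp3 : DM4 → DM4 → DM4 → DM4
  | _, t, _ => f
  | _, f, _ => f
  | t, n, _ => n
  | f, n, _ => f
  | b, n, _ => f
  | n, n, b => f
  | n, n, _ => n
  | t, b, _ => b
  | f, b, _ => f
  | n, b, _ => f
  | b, b, n => f
  | b, b, _ => b

/-- The set of designated values. -/
def Des : Set DM4 := {t, b}

/-- Designatedness as a Boolean predicate. -/
def des : DM4 → Bool
  | t => true
  | b => true
  | _ => false

/-- The protoimplication →_{t-max}. -/
def tmax (x y : DM4) : DM4 :=
  match des x, des y with
  | true, false => n
  | _, _ => t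

/-- The protoimplication →_{i-max}. -/
def imax (x y : DM4) : DM4 :=
  match des x, des y with
  | true, false => f
  | _, _ => b

/-- The protoimplication ↔_{t-min}. -/
def tmin (x y : DM4) : DM4 := if x = y then b else f

/-- The protoimplication ↔_{i-min}. -/
def imin (x y : DM4) : DM4 := if x = y then t else n

/-- A binary operation is a protoimplication if it satisfies Reflexivity and Modus Ponens
with respect to the designated set {t, b}. -/
def IsProtoimplication (r : DM4 → DM4 → DM4) : Prop :=
  (∀ a : DM4, r a a ∈ Des) ∧ ∀ a c : DM4, a ∈ Des → r a c ∈ Des → c ∈ Des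

/-- `DMFun k` is the type of De Morgan functions of arity `k + 1` (arities are positive). -/
abbrev DMFun (k : ℕ) : Type := (Fin (k + 1) → DM4) → DM4

/-- Membership in the clone generated by the family of operations `S`
(`S k` is the set of generators of arity `k + 1`). -/
inductive InClone (S : ∀ k : ℕ, Set (DMFun k)) : ∀ k : ℕ, DMFun k → Prop
  | base {k : ℕ} {g : DMFun k} : g ∈ S k → InClone S k g
  | proj {k : ℕ} (i : Fin (k + 1)) : InClone S k (fun x => x i)
  | comp {k m : ℕ} {g : DMFun m} {h : Fin (m + 1) → DMFun k} :
      InClone S m g → (∀ i, InClone S k (h i)) →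
      InClone S k (fun x => g (fun i => h i x))

/-- A family of sets of De Morgan functions is a clone if it contains all projections
and is closed under composition. -/
structure IsClone (C : ∀ k : ℕ, Set (DMFun k)) : Prop where
  proj : ∀ (k : ℕ) (i : Fin (k + 1)), (fun x => x i) ∈ C k
  comp : ∀ (k m : ℕ) (g : DMFun m) (h : Fin (m + 1) → DMFun k),
      g ∈ C m → (∀ i, h i ∈ C k) → (fun x => g (fun i => h i x)) ∈ C k

/-- The generating family consisting of a single unary operation. -/
def op1 (g : DM4 → DM4) : ∀ k : ℕ, Set (DMFun k)
  | 0 => {fun x => g (x 0)}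
  | _ + 1 => ∅

/-- The generating family consisting of a single binary operation. -/
def op2 (g : DM4 → DM4 → DM4) : ∀ k : ℕ, Set (DMFun k)
  | 1 => {fun x => g (x 0) (x 1)}
  | _ => ∅

/-- The generating family consisting of a single ternary operation. -/
def op3 (g : DM4 → DM4 → DM4 → DM4) : ∀ k : ℕ, Set (DMFun k)
  | 2 => {fun x => g (x 0) (x 1) (x 2)}
  | _ => ∅

/-- Union of two families of operations. -/
def funion (S T : ∀ k : ℕ, Set (DMFun k)) : ∀ k : ℕ, Set (DMFun k) := fun k => S k ∪ T k

infixr:65 " ⊹ " => funion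

/-- The generators of DLat: ∧, ∨, t, f (constants as unary constant functions). -/
def DLatGen : ∀ k : ℕ, Set (DMFun k) :=
  op2 meet ⊹ op2 join ⊹ op1 (fun _ => t) ⊹ op1 (fun _ => f)

/-- The generators of DMA: ∧, ∨, t, f, −. -/
def DMAGen : ∀ k : ℕ, Set (DMFun k) := DLatGen ⊹ op1 neg

/-- The generators of BiLat: ∧, ∨, t, f, ⊗, ⊕, n, b. -/
def BiLatGen : ∀ k : ℕ, Set (DMFun k) :=
  DLatGen ⊹ op2 imeet ⊹ op2 ijoin ⊹ op1 (fun _ => n) ⊹ op1 (fun _ => b)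

/-- A De Morgan function is harmonious if it commutes with conflation. -/
def Harmonious {k : ℕ} (g : DMFun k) : Prop :=
  ∀ x : Fin (k + 1) → DM4, g (fun i => conf (x i)) = conf (g x)

/-- A De Morgan function is positive if it is monotone in the componentwise truth order. -/
def Positive {k : ℕ} (g : DMFun k) : Prop :=
  ∀ x y : Fin (k + 1) → DM4, (∀ i, tle (x i) (y i)) → tle (g x) (g y)

/-- A De Morgan function is persistent if it is monotone in the componentwise
information order. -/
def Persistent {k : ℕ} (g : DMFun k) : Prop :=
  ∀ x y : Fin (k + 1) → DM4, (∀ i, ile (x i) (y i)) → ile (g x) (g y)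

/-- A De Morgan function preserves a subset X of DM4 if it maps tuples from X into X. -/
def Preserves {k : ℕ} (g : DMFun k) (X : Set DM4) : Prop :=
  ∀ x : Fin (k + 1) → DM4, (∀ i, x i ∈ X) → g x ∈ X

def B2 : Set DM4 := {t, f}
def K3 : Set DM4 := {t, n, f}
def P3 : Set DM4 := {t, b, f}

/-- A unary operation as a De Morgan function. -/
def toF1 (g : DM4 → DM4) : DMFun 0 := fun x => g (x 0)

/-- A binary operation as a De Morgan function. -/
def toF2 (g : DM4 → DM4 → DM4) : DMFun 1 := fun x => g (x 0) (x 1)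

/-- A ternary operation as a De Morgan function. -/
def toF3 (g : DM4 → DM4 → DM4 → DM4) : DMFun 2 := fun x => g (x 0) (x 1) (x 2)

/-- The clone generated by a family of operations, as a family of sets. -/
def CloneOf (S : ∀ k : ℕ, Set (DMFun k)) : ∀ k : ℕ, Set (DMFun k) :=
  fun k => {g | InClone S k g}

/-- Inclusion of families of operations. -/
def CloneLE (C D : ∀ k : ℕ, Set (DMFun k)) : Prop := ∀ k : ℕ, C k ⊆ D k


/-! ### Auxiliary infrastructure for the proof -/

instance : Fintype DM4 where
  elems := ⟨↑[t, f, n, b], by decide⟩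
  complete := by intro x; cases x <;> decide

instance (x y : DM4) : Decidable (tle x y) := by unfold tle; infer_instance
instance (x y : DM4) : Decidable (ile x y) := by unfold ile; infer_instance
instance {k : ℕ} (g : DMFun k) : Decidable (Positive g) := by
  unfold Positive; infer_instance
instance {k : ℕ} (g : DMFun k) : Decidable (Persistent g) := by
  unfold Persistent; infer_instance

section Infra

variable {S : ∀ k : ℕ, Set (DMFun k)}

/-- Unary composition inside a clone. -/
lemma inClone_comp1 {u : DM4 → DM4} (hu : InClone S 0 (toF1 u)) {k : ℕ} {g : DMFun k}
    (hg : InClone S k g) : InClone S k (fun x => u (g x)) :=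
  InClone.comp (h := fun _ => g) hu (fun _ => hg)

/-- Binary composition inside a clone. -/
lemma inClone_comp2 {u : DM4 → DM4 → DM4} (hu : InClone S 1 (toF2 u)) {k : ℕ}
    {g1 g2 : DMFun k} (h1 : InClone S k g1) (h2 : InClone S k g2) :
    InClone S k (fun x => u (g1 x) (g2 x)) :=
  InClone.comp (h := fun i => if i = 0 then g1 else g2) hu
    (fun i => by fin_cases i <;> simp <;> assumption)

lemma mem_meet : toF2 meet ∈ BiLatGen 1 := Or.inl (Or.inl rfl)
lemma mem_join : toF2 join ∈ BiLatGen 1 := Or.inl (Or.inr (Or.inl rfl))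
lemma mem_imeet : toF2 imeet ∈ BiLatGen 1 := Or.inr (Or.inl rfl)
lemma mem_ijoin : toF2 ijoin ∈ BiLatGen 1 := Or.inr (Or.inr (Or.inl rfl))
lemma mem_ct : toF1 (fun _ => t) ∈ BiLatGen 0 := Or.inl (Or.inr (Or.inr (Or.inl rfl)))
lemma mem_cf : toF1 (fun _ => f) ∈ BiLatGen 0 := Or.inl (Or.inr (Or.inr (Or.inr rfl)))
lemma mem_cn : toF1 (fun _ => n) ∈ BiLatGen 0 := Or.inr (Or.inr (Or.inr (Or.inl rfl)))
lemma mem_cb : toF1 (fun _ => b) ∈ BiLatGen 0 := Or.inr (Or.inr (Or.inr (Or.inr rfl)))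

lemma inClone_const (hB : ∀ k, BiLatGen k ⊆ S k) {k : ℕ} (v : DM4) :
    InClone S k (fun _ => v) := by
  have h0 : InClone S 0 (toF1 (fun _ => v)) := by
    cases v
    · exact .base (hB 0 mem_ct)
    · exact .base (hB 0 mem_cf)
    · exact .base (hB 0 mem_cn)
    · exact .base (hB 0 mem_cb)
  exact inClone_comp1 h0 (InClone.proj 0)

lemma inClone_meet (hB : ∀ k, BiLatGen k ⊆ S k) {k : ℕ} {g1 g2 : DMFun k}
    (h1 : InClone S k g1) (h2 : InClone S k g2) :
    InClone S k (fun x => meet (g1 x) (g2 x)) :=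
  inClone_comp2 (.base (hB 1 mem_meet)) h1 h2

lemma inClone_join (hB : ∀ k, BiLatGen k ⊆ S k) {k : ℕ} {g1 g2 : DMFun k}
    (h1 : InClone S k g1) (h2 : InClone S k g2) :
    InClone S k (fun x => join (g1 x) (g2 x)) :=
  inClone_comp2 (.base (hB 1 mem_join)) h1 h2

lemma inClone_imeet (hB : ∀ k, BiLatGen k ⊆ S k) {k : ℕ} {g1 g2 : DMFun k}
    (h1 : InClone S k g1) (h2 : InClone S k g2) :
    InClone S k (fun x => imeet (g1 x) (g2 x)) :=
  inClone_comp2 (.base (hB 1 mem_imeet)) h1 h2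

lemma inClone_ijoin (hB : ∀ k, BiLatGen k ⊆ S k) {k : ℕ} {g1 g2 : DMFun k}
    (h1 : InClone S k g1) (h2 : InClone S k g2) :
    InClone S k (fun x => ijoin (g1 x) (g2 x)) :=
  inClone_comp2 (.base (hB 1 mem_ijoin)) h1 h2

end Infra

/-- Unary indicator functions generated in the various clones. -/
def ef : DM4 → DM4
  | f => t
  | _ => f

def en : DM4 → DM4
  | n => t
  | _ => f

def eb : DM4 → DM4
  | b => t
  | _ => f

def Dt : DM4 → DM4
  | t => b
  | b => b
  | _ => n

def Df : DM4 → DM4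
  | f => b
  | b => b
  | _ => n

def Db : DM4 → DM4
  | b => b
  | _ => n

section UnaryTerms

variable {S : ∀ k : ℕ, Set (DMFun k)}

lemma inClone_conf_app (hconf : InClone S 0 (toF1 conf)) {k : ℕ} {g : DMFun k}
    (hg : InClone S k g) :
    InClone S k (fun x => conf (g x)) := inClone_comp1 hconf hg

lemma inClone_neg_app (hneg : InClone S 0 (toF1 neg)) {k : ℕ} {g : DMFun k}
    (hg : InClone S k g) :
    InClone S k (fun x => neg (g x)) := inClone_comp1 hneg hg

lemma inClone_box (hB : ∀ k, BiLatGen k ⊆ S k) (hconf : InClone S 0 (toF1 conf))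
    {k : ℕ} {g : DMFun k} (hg : InClone S k g) :
    InClone S k (fun x => box (g x)) := by
  have h : (fun x => box (g x)) = (fun x => meet (g x) (conf (g x))) := by
    funext x; cases g x <;> rfl
  rw [h]
  exact inClone_meet hB hg (inClone_conf_app hconf hg)

lemma inClone_nabla (hB : ∀ k, BiLatGen k ⊆ S k) (hconf : InClone S 0 (toF1 conf))
    {k : ℕ} {g : DMFun k} (hg : InClone S k g) :
    InClone S k (fun x => nabla (g x)) := by
  have h : (fun x => nabla (g x))
      = (fun x => meet (join (g x) ((fun _ => b) x)) (join ((fun _ => n) x) (conf (g x)))) := by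
    funext x; cases g x <;> rfl
  rw [h]
  exact inClone_meet hB (inClone_join hB hg (inClone_const hB b))
    (inClone_join hB (inClone_const hB n) (inClone_conf_app hconf hg))

lemma inClone_delta (hB : ∀ k, BiLatGen k ⊆ S k) (hconf : InClone S 0 (toF1 conf))
    {k : ℕ} {g : DMFun k} (hg : InClone S k g) :
    InClone S k (fun x => delta (g x)) := by
  have h : (fun x => delta (g x))
      = (fun x => meet (join (g x) ((fun _ => n) x)) (join ((fun _ => b) x) (conf (g x)))) := by
    funext x; cases g x <;> rfl
  rw [h]
  exact inClone_meet hB (inClone_join hB hg (inClone_const hB n))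
    (inClone_join hB (inClone_const hB b) (inClone_conf_app hconf hg))

lemma inClone_Dt (hB : ∀ k, BiLatGen k ⊆ S k) (hneg : InClone S 0 (toF1 neg))
    {k : ℕ} {g : DMFun k} (hg : InClone S k g) :
    InClone S k (fun x => Dt (g x)) := by
  have h : (fun x => Dt (g x))
      = (fun x => meet (join (g x) ((fun _ => n) x)) (join ((fun _ => b) x) (neg (g x)))) := by
    funext x; cases g x <;> rfl
  rw [h]
  exact inClone_meet hB (inClone_join hB hg (inClone_const hB n))
    (inClone_join hB (inClone_const hB b) (inClone_neg_app hneg hg))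

lemma inClone_Df (hB : ∀ k, BiLatGen k ⊆ S k) (hneg : InClone S 0 (toF1 neg))
    {k : ℕ} {g : DMFun k} (hg : InClone S k g) :
    InClone S k (fun x => Df (g x)) := by
  have h : (fun x => Df (g x))
      = (fun x => meet (join (g x) ((fun _ => b) x)) (join ((fun _ => n) x) (neg (g x)))) := by
    funext x; cases g x <;> rfl
  rw [h]
  exact inClone_meet hB (inClone_join hB hg (inClone_const hB b))
    (inClone_join hB (inClone_const hB n) (inClone_neg_app hneg hg))

lemma inClone_Db (hB : ∀ k, BiLatGen k ⊆ S k) (hneg : InClone S 0 (toF1 neg))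
    {k : ℕ} {g : DMFun k} (hg : InClone S k g) :
    InClone S k (fun x => Db (g x)) := by
  have h : (fun x => Db (g x)) = (fun x => imeet (g x) (neg (g x))) := by
    funext x; cases g x <;> rfl
  rw [h]
  exact inClone_imeet hB hg (inClone_neg_app hneg hg)

lemma inClone_ef (hB : ∀ k, BiLatGen k ⊆ S k) (hconf : InClone S 0 (toF1 conf))
    (hneg : InClone S 0 (toF1 neg)) {k : ℕ} {g : DMFun k} (hg : InClone S k g) :
    InClone S k (fun x => ef (g x)) := by
  have h : (fun x => ef (g x)) = (fun x => box (neg (g x))) := by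
    funext x; cases g x <;> rfl
  rw [h]
  exact inClone_box hB hconf (inClone_neg_app hneg hg)

lemma inClone_en (hB : ∀ k, BiLatGen k ⊆ S k) (hconf : InClone S 0 (toF1 conf))
    (hneg : InClone S 0 (toF1 neg)) {k : ℕ} {g : DMFun k} (hg : InClone S k g) :
    InClone S k (fun x => en (g x)) := by
  have h : (fun x => en (g x)) = (fun x => meet (nabla (g x)) (neg (box (g x)))) := by
    funext x; cases g x <;> rfl
  rw [h]
  exact inClone_meet hB (inClone_nabla hB hconf hg)
    (inClone_neg_app hneg (inClone_box hB hconf hg))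

lemma inClone_eb (hB : ∀ k, BiLatGen k ⊆ S k) (hconf : InClone S 0 (toF1 conf))
    (hneg : InClone S 0 (toF1 neg)) {k : ℕ} {g : DMFun k} (hg : InClone S k g) :
    InClone S k (fun x => eb (g x)) := by
  have h : (fun x => eb (g x)) = (fun x => meet (delta (g x)) (neg (box (g x)))) := by
    funext x; cases g x <;> rfl
  rw [h]
  exact inClone_meet hB (inClone_delta hB hconf hg)
    (inClone_neg_app hneg (inClone_box hB hconf hg))

end UnaryTerms

/-- The interpolation expression. -/
def expr (M J : DM4 → DM4 → DM4) (d1 d2 d3 d4 : DM4 → DM4) (G : DM4 → DM4) (c : DM4) : DM4 :=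
  J (J (M (d1 c) (G t)) (M (d2 c) (G f))) (J (M (d3 c) (G n)) (M (d4 c) (G b)))

/-- A unary function determined by its four values. -/
def G4 (gT gF gN gB : DM4) : DM4 → DM4 := fun v =>
  match v with
  | t => gT
  | f => gF
  | n => gN
  | b => gB

lemma G4_eq (G : DM4 → DM4) : G4 (G t) (G f) (G n) (G b) = G := by
  funext v; cases v <;> rfl

lemma key_full_val : ∀ gT gF gN gB c : DM4,
    expr meet join box ef en eb (G4 gT gF gN gB) c = G4 gT gF gN gB c := by decide

lemma key_pos_val : ∀ gT gF gN gB : DM4,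
    (∀ a c : DM4, tle a c → tle (G4 gT gF gN gB a) (G4 gT gF gN gB c)) → ∀ c,
    expr meet join box (fun _ => t) nabla delta (G4 gT gF gN gB) c = G4 gT gF gN gB c := by
  decide

lemma key_pers_val : ∀ gT gF gN gB : DM4,
    (∀ a c : DM4, ile a c → ile (G4 gT gF gN gB a) (G4 gT gF gN gB c)) → ∀ c,
    expr imeet ijoin Dt Df (fun _ => b) Db (G4 gT gF gN gB) c = G4 gT gF gN gB c := by
  decide

lemma key_full : ∀ G : DM4 → DM4, ∀ c,
    expr meet join box ef en eb G c = G c := by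
  intro G c
  have h := key_full_val (G t) (G f) (G n) (G b) c
  rwa [G4_eq] at h

lemma key_pos : ∀ G : DM4 → DM4, (∀ a c, tle a c → tle (G a) (G c)) → ∀ c,
    expr meet join box (fun _ => t) nabla delta G c = G c := by
  intro G hG c
  have h := key_pos_val (G t) (G f) (G n) (G b) (by rw [G4_eq]; exact hG) c
  rwa [G4_eq] at h

lemma key_pers : ∀ G : DM4 → DM4, (∀ a c, ile a c → ile (G a) (G c)) → ∀ c,
    expr imeet ijoin Dt Df (fun _ => b) Db G c = G c := by
  intro G hG c
  have h := key_pers_val (G t) (G f) (G n) (G b) (by rw [G4_eq]; exact hG) c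
  rwa [G4_eq] at h

/-- The generic completeness lemma: if a clone contains the lattice operations,
suitable indicator functions, and the interpolation identity holds for all functions
satisfying `Q`, then every function satisfying `Q` is in the clone. -/
lemma generic_complete (S : ∀ k : ℕ, Set (DMFun k))
    (M J : DM4 → DM4 → DM4) (d1 d2 d3 d4 : DM4 → DM4)
    (Q : ∀ k : ℕ, DMFun k → Prop) (C : (DM4 → DM4) → Prop)
    (hM : ∀ {k} {g1 g2 : DMFun k}, InClone S k g1 → InClone S k g2 →
      InClone S k (fun x => M (g1 x) (g2 x)))
    (hJ : ∀ {k} {g1 g2 : DMFun k}, InClone S k g1 → InClone S k g2 →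
      InClone S k (fun x => J (g1 x) (g2 x)))
    (hd1 : ∀ {k} {g : DMFun k}, InClone S k g → InClone S k (fun x => d1 (g x)))
    (hd2 : ∀ {k} {g : DMFun k}, InClone S k g → InClone S k (fun x => d2 (g x)))
    (hd3 : ∀ {k} {g : DMFun k}, InClone S k g → InClone S k (fun x => d3 (g x)))
    (hd4 : ∀ {k} {g : DMFun k}, InClone S k g → InClone S k (fun x => d4 (g x)))
    (hconst : ∀ {k} (v : DM4), InClone S k (fun _ => v))
    (key : ∀ G, C G → ∀ c, expr M J d1 d2 d3 d4 G c = G c)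
    (hQC : ∀ (k : ℕ) (g : DMFun k) (y : Fin k → DM4), Q k g →
      C (fun c => g (Fin.snoc y c)))
    (hres : ∀ (k : ℕ) (g : DMFun (k + 1)) (c : DM4), Q (k + 1) g →
      Q k (fun y => g (Fin.snoc y c))) :
    ∀ k (g : DMFun k), Q k g → InClone S k g := by
  intro k
  induction k with
  | zero =>
    intro g hQ
    have hC : C (fun c => g (fun _ => c)) := by
      have h2 : (fun c => g (fun _ => c)) = (fun c => g (Fin.snoc (Fin.elim0) c)) := by
        funext c
        have h3 : (fun (_ : Fin 1) => c) = Fin.snoc (Fin.elim0) c := by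
          funext i
          have hi : i = Fin.last 0 := Fin.fin_one_eq_zero i
          rw [hi, Fin.snoc_last]
        rw [h3]
      rw [h2]
      exact hQC 0 g Fin.elim0 hQ
    have hg : g = fun x =>
        expr M J d1 d2 d3 d4 (fun c => g (fun _ => c)) (x 0) := by
      funext x
      rw [key _ hC (x 0)]
      congr 1
      funext i
      have hi : i = 0 := Fin.fin_one_eq_zero i
      rw [hi]
    rw [hg]
    exact hJ
      (hJ (hM (hd1 (InClone.proj 0)) (hconst (g (fun _ => t))))
          (hM (hd2 (InClone.proj 0)) (hconst (g (fun _ => f)))))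
      (hJ (hM (hd3 (InClone.proj 0)) (hconst (g (fun _ => n))))
          (hM (hd4 (InClone.proj 0)) (hconst (g (fun _ => b)))))
  | succ k ih =>
    intro g hQ
    have hF : ∀ c : DM4, InClone S (k + 1) (fun x => g (Fin.snoc (Fin.init x) c)) := by
      intro c
      have hgc : InClone S k (fun y => g (Fin.snoc y c)) := ih _ (hres k g c hQ)
      exact InClone.comp (h := fun i => fun x => x i.castSucc) hgc
        (fun i => InClone.proj i.castSucc)
    have hg : g = fun x =>
        expr M J d1 d2 d3 d4 (fun c => g (Fin.snoc (Fin.init x) c)) (x (Fin.last (k + 1))) := by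
      funext x
      rw [key _ (hQC (k + 1) g (Fin.init x) hQ) (x (Fin.last (k + 1)))]
      rw [Fin.snoc_init_self]
    rw [hg]
    exact hJ
      (hJ (hM (hd1 (InClone.proj (Fin.last (k + 1)))) (hF t))
          (hM (hd2 (InClone.proj (Fin.last (k + 1)))) (hF f)))
      (hJ (hM (hd3 (InClone.proj (Fin.last (k + 1)))) (hF n))
          (hM (hd4 (InClone.proj (Fin.last (k + 1)))) (hF b)))

lemma tle_refl (a : DM4) : tle a a := Or.inl rfl
lemma ile_refl (a : DM4) : ile a a := Or.inl rfl

lemma positive_hQC : ∀ (k : ℕ) (g : DMFun k) (y : Fin k → DM4), Positive g →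
    ∀ a c, tle a c → tle (g (Fin.snoc y a)) (g (Fin.snoc y c)) := by
  intro k g y hg a c hac
  apply hg
  intro i
  refine Fin.lastCases ?_ ?_ i
  · rw [Fin.snoc_last, Fin.snoc_last]; exact hac
  · intro j; rw [Fin.snoc_castSucc, Fin.snoc_castSucc]; exact tle_refl _

lemma positive_hres : ∀ (k : ℕ) (g : DMFun (k + 1)) (c : DM4), Positive g →
    Positive (fun y => g (Fin.snoc y c)) := by
  intro k g c hg x y hxy
  apply hg
  intro i
  refine Fin.lastCases ?_ ?_ i
  · rw [Fin.snoc_last, Fin.snoc_last]; exact tle_refl _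
  · intro j; rw [Fin.snoc_castSucc, Fin.snoc_castSucc]; exact hxy j

lemma persistent_hQC : ∀ (k : ℕ) (g : DMFun k) (y : Fin k → DM4), Persistent g →
    ∀ a c, ile a c → ile (g (Fin.snoc y a)) (g (Fin.snoc y c)) := by
  intro k g y hg a c hac
  apply hg
  intro i
  refine Fin.lastCases ?_ ?_ i
  · rw [Fin.snoc_last, Fin.snoc_last]; exact hac
  · intro j; rw [Fin.snoc_castSucc, Fin.snoc_castSucc]; exact ile_refl _

lemma persistent_hres : ∀ (k : ℕ) (g : DMFun (k + 1)) (c : DM4), Persistent g →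
    Persistent (fun y => g (Fin.snoc y c)) := by
  intro k g c hg x y hxy
  apply hg
  intro i
  refine Fin.lastCases ?_ ?_ i
  · rw [Fin.snoc_last, Fin.snoc_last]; exact ile_refl _
  · intro j; rw [Fin.snoc_castSucc, Fin.snoc_castSucc]; exact hxy j

/-! Soundness: everything in the respective clones is positive / persistent. -/

lemma positive_sound : ∀ {k : ℕ} {g : DMFun k},
    InClone (BiLatGen ⊹ op1 conf) k g → Positive g := by
  intro k g h
  induction h with
  | @base k g hb =>
    match k, g, hb with
    | 0, g, hb =>
      have hb' : ((False ∨ (False ∨ (g = toF1 (fun _ => t) ∨ g = toF1 (fun _ => f)))) ∨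
          (False ∨ (False ∨ (g = toF1 (fun _ => n) ∨ g = toF1 (fun _ => b))))) ∨
          g = toF1 conf := hb
      rcases hb' with ((h | h | h | h) | (h | h | h | h)) | h <;>
        first
          | exact h.elim
          | (subst h; decide)
    | 1, g, hb =>
      have hb' : ((g = toF2 meet ∨ (g = toF2 join ∨ (False ∨ False))) ∨
          (g = toF2 imeet ∨ (g = toF2 ijoin ∨ (False ∨ False)))) ∨ False := hb
      rcases hb' with ((h | h | h | h) | (h | h | h | h)) | h <;>
        first
          | exact h.elim
          | (subst h; decide)
    | (m + 2), g, hb =>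
      have hb' : ((False ∨ (False ∨ (False ∨ False))) ∨
          (False ∨ (False ∨ (False ∨ False)))) ∨ False := hb
      rcases hb' with ((h | h | h | h) | (h | h | h | h)) | h <;> exact h.elim
  | proj i => intro x y hxy; exact hxy i
  | comp hg hh ihg ihh => intro x y hxy; exact ihg _ _ (fun i => ihh i x y hxy)

lemma persistent_sound : ∀ {k : ℕ} {g : DMFun k},
    InClone (BiLatGen ⊹ op1 neg) k g → Persistent g := by
  intro k g h
  induction h with
  | @base k g hb =>
    match k, g, hb with
    | 0, g, hb =>
      have hb' : ((False ∨ (False ∨ (g = toF1 (fun _ => t) ∨ g = toF1 (fun _ => f)))) ∨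
          (False ∨ (False ∨ (g = toF1 (fun _ => n) ∨ g = toF1 (fun _ => b))))) ∨
          g = toF1 neg := hb
      rcases hb' with ((h | h | h | h) | (h | h | h | h)) | h <;>
        first
          | exact h.elim
          | (subst h; decide)
    | 1, g, hb =>
      have hb' : ((g = toF2 meet ∨ (g = toF2 join ∨ (False ∨ False))) ∨
          (g = toF2 imeet ∨ (g = toF2 ijoin ∨ (False ∨ False)))) ∨ False := hb
      rcases hb' with ((h | h | h | h) | (h | h | h | h)) | h <;>
        first
          | exact h.elim
          | (subst h; decide)
    | (m + 2), g, hb =>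
      have hb' : ((False ∨ (False ∨ (False ∨ False))) ∨
          (False ∨ (False ∨ (False ∨ False)))) ∨ False := hb
      rcases hb' with ((h | h | h | h) | (h | h | h | h)) | h <;> exact h.elim
  | proj i => intro x y hxy; exact hxy i
  | comp hg hh ihg ihh => intro x y hxy; exact ihg _ _ (fun i => ihh i x y hxy)

/-- ⟨BiLat, −, ∂⟩ is the clone of all De Morgan functions;
⟨BiLat, ∂⟩ is the clone of all positive De Morgan functions;
⟨BiLat, −⟩ is the clone of all persistent De Morgan functions. -/
theorem positive_clone_and_persistent_clone (k : ℕ) (g : DMFun k) :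
    InClone (BiLatGen ⊹ op1 neg ⊹ op1 conf) k g ∧
    (InClone (BiLatGen ⊹ op1 conf) k g ↔ Positive g) ∧
    (InClone (BiLatGen ⊹ op1 neg) k g ↔ Persistent g) := by
  refine ⟨?_, ⟨fun h => positive_sound h, ?_⟩, ⟨fun h => persistent_sound h, ?_⟩⟩
  · -- full clone
    have hB : ∀ j, BiLatGen j ⊆ (BiLatGen ⊹ op1 neg ⊹ op1 conf) j := fun j x hx => Or.inl hx
    have hconf : InClone (BiLatGen ⊹ op1 neg ⊹ op1 conf) 0 (toF1 conf) :=
      .base (Or.inr (Or.inr rfl))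
    have hneg : InClone (BiLatGen ⊹ op1 neg ⊹ op1 conf) 0 (toF1 neg) :=
      .base (Or.inr (Or.inl rfl))
    exact generic_complete _ meet join box ef en eb (fun _ _ => True) (fun _ => True)
      (fun h1 h2 => inClone_meet hB h1 h2) (fun h1 h2 => inClone_join hB h1 h2)
      (fun hg => inClone_box hB hconf hg) (fun hg => inClone_ef hB hconf hneg hg)
      (fun hg => inClone_en hB hconf hneg hg) (fun hg => inClone_eb hB hconf hneg hg)
      (fun v => inClone_const hB v)
      (fun G _ c => key_full G c) (fun _ _ _ _ => trivial) (fun _ _ _ _ => trivial)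
      k g trivial
  · -- positive completeness
    intro hpos
    have hB : ∀ j, BiLatGen j ⊆ (BiLatGen ⊹ op1 conf) j := fun j x hx => Or.inl hx
    have hconf : InClone (BiLatGen ⊹ op1 conf) 0 (toF1 conf) := .base (Or.inr rfl)
    exact generic_complete _ meet join box (fun _ => t) nabla delta
      (fun _ g => Positive g) (fun G => ∀ a b, tle a b → tle (G a) (G b))
      (fun h1 h2 => inClone_meet hB h1 h2) (fun h1 h2 => inClone_join hB h1 h2)
      (fun hg => inClone_box hB hconf hg) (fun _ => inClone_const hB t)
      (fun hg => inClone_nabla hB hconf hg) (fun hg => inClone_delta hB hconf hg)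
      (fun v => inClone_const hB v) key_pos positive_hQC positive_hres k g hpos
  · -- persistent completeness
    intro hper
    have hB : ∀ j, BiLatGen j ⊆ (BiLatGen ⊹ op1 neg) j := fun j x hx => Or.inl hx
    have hneg : InClone (BiLatGen ⊹ op1 neg) 0 (toF1 neg) := .base (Or.inr rfl)
    exact generic_complete _ imeet ijoin Dt Df (fun _ => b) Db
      (fun _ g => Persistent g) (fun G => ∀ a b, ile a b → ile (G a) (G b))
      (fun h1 h2 => inClone_imeet hB h1 h2) (fun h1 h2 => inClone_ijoin hB h1 h2)
      (fun hg => inClone_Dt hB hneg hg) (fun hg => inClone_Df hB hneg hg)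
      (fun _ => inClone_const hB b) (fun hg => inClone_Db hB hneg hg)
      (fun v => inClone_const hB v) key_pers persistent_hQC persistent_hres k g hper

end DM4
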